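/- Let q = 2^r be an even prime power and n ≥ 1. For each nonzero α ∈ F_q, let N_α denote the number of pairs (x,y) ∈ F_{q^n} × F_{q^n} satisfying x·(y² + y) = α·(x² + 1). Then q² · F_q(n,0,0) = q^n + (q − 1) · ∑_{α ∈ F_q, α ≠ 0} (N_α − q^n + 2). (Equivalently, F_q(n,0,0) = q^{n−2} + ((q−1)/q²)·∑_{α∈F_q^×}(S_α(F_{q^n}) + 1), where S_α(F_{q^n}) = #C_α(F_{q^n}) − (q^n+1) and the projective curve C_α : x(y²+y)=α(x²+1) over F_q has exactly two points at infinity, so #C_α(F_{q^n}) = N_α + 2.) -/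

import Mathlib

/-!
For `x ≠ 0` the equation reads `y² + y = α (x + x⁻¹)`. The Artin–Schreier map `y ↦ y² + y` is
two-to-one onto the kernel of the absolute trace, and the absolute trace of `α (x + x⁻¹)` is
`tr (α (Tr x + Tr x⁻¹))`. Summing over `α ∈ F_q^×` therefore turns `∑ N_α` into a count of the
`x` with `Tr x = Tr x⁻¹`.

That count is read off the table `B(s, u) = #{x | Tr x = s, Tr x⁻¹ = u}`: it is symmetric
(`x ↦ x⁻¹`), satisfies `B(cs, c⁻¹u) = B(s, u)` (`x ↦ cx`), and each row sums to `q^(n-1)`.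
Hence `B(s, s) = B(s², 1)` for `s ≠ 0`; since squaring permutes `F_q^×` in characteristic 2,
the diagonal sums to `B(0, 0) + q^(n-1) - B(0, 1)`, while row `0` gives
`B(0, 0) + (q - 1) B(0, 1) = q^(n-1)`, and `B(0, 0) = F_q(n,0,0)`.
-/

open Finset Algebra

theorem AddMonoidHom.card_fiber_mul_card_of_surjective {A B : Type*} [AddGroup A] [Fintype A]
    [AddGroup B] [Fintype B] [DecidableEq B] (f : A →+ B) (hf : Function.Surjective f) (b : B) :
    #{a | f a = b} * Fintype.card B = Fintype.card A := by
  have hfibers := card_eq_sum_card_fiberwise (f := f) (s := univ) (t := univ)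
    fun _ _ ↦ mem_univ _
  rwa [sum_congr rfl fun b' _ ↦ card_fiber_eq_of_mem_range f (hf b') (hf b), sum_const, card_univ,
    card_univ, smul_eq_mul, mul_comm, eq_comm] at hfibers

section Trace

variable (F K : Type*) [Field F] [Fintype F] [Field K]

theorem Algebra.trace_pow_card [Algebra F K] [Algebra.IsAlgebraic F K] (x : K) :
    trace F K (x ^ Fintype.card F) = trace F K x :=
  trace_eq_of_algEquiv (FiniteField.frobeniusAlgEquivOfAlgebraic F K) x

omit [Fintype F] in
theorem Algebra.trace_algebraMap_mul [Algebra F K] (a : F) (x : K) :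
    trace F K (algebraMap F K a * x) = a * trace F K x := by
  rw [← Algebra.smul_def, map_smul, smul_eq_mul]

variable {F K} [DecidableEq F] [Fintype K] [Algebra F K]

theorem card_trace_mul_eq_mul_card {v : K} (hv : v ≠ 0) (s : F) :
    #{a : K | trace F K (a * v) = s} * Fintype.card F = Fintype.card K :=
  ((trace F K).toAddMonoidHom.comp (AddMonoidHom.mulRight v)).card_fiber_mul_card_of_surjective
    ((trace_surjective F K).comp (mulRight_bijective₀ v hv).surjective) s

theorem card_trace_eq_mul_card (s : F) :
    #{x : K | trace F K x = s} * Fintype.card F = Fintype.card K := by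
  simpa using card_trace_mul_eq_mul_card (F := F) (one_ne_zero (α := K)) s

end Trace

section ArtinSchreier

variable {K : Type*} [Field K]

def artinSchreier [CharP K 2] : K →+ K :=
  (frobenius K 2 : K →+* K).toAddMonoidHom + AddMonoidHom.id K

theorem trace_sq_add_self [Fintype K] [Algebra (ZMod 2) K] (y : K) :
    trace (ZMod 2) K (y ^ 2 + y) = 0 := by
  have hfrob := trace_pow_card (ZMod 2) K y
  rw [ZMod.card] at hfrob
  rw [map_add, hfrob, CharTwo.add_self_eq_zero]

variable [Fintype K] [DecidableEq K] [CharP K 2]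

theorem card_sq_add_self_eq_zero : #{y : K | y ^ 2 + y = 0} = 2 := by
  have hroots : ({y : K | y ^ 2 + y = 0} : Finset K) = {0, 1} := by
    ext y
    simp only [mem_filter, mem_univ, true_and, mem_insert, mem_singleton]
    rw [show y ^ 2 + y = y * (y + 1) by ring, mul_eq_zero, CharTwo.add_eq_zero]
  rw [hroots, card_pair zero_ne_one]

variable [Algebra (ZMod 2) K]

theorem card_sq_add_self_eq (c : K) :
    #{y : K | y ^ 2 + y = c} = if trace (ZMod 2) K c = 0 then 2 else 0 := by
  -- Fibres have 0 or 2 points and lie over the trace kernel; both sides sum to `#K`.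
  set g : K → ℕ := fun c ↦ if trace (ZMod 2) K c = 0 then 2 else 0
  have hle : ∀ c ∈ univ, #{y : K | y ^ 2 + y = c} ≤ g c := by
    intro c _
    by_cases hc : ∃ y, y ^ 2 + y = c
    · obtain ⟨y, rfl⟩ := hc
      have hfiber : #{z : K | z ^ 2 + z = y ^ 2 + y} = #{z : K | z ^ 2 + z = 0} :=
        AddMonoidHom.card_fiber_eq_of_mem_range artinSchreier ⟨y, rfl⟩ ⟨0, map_zero _⟩
      simp only [g, hfiber, card_sq_add_self_eq_zero, trace_sq_add_self, if_pos, le_refl]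
    · have : ({y : K | y ^ 2 + y = c} : Finset K) = ∅ :=
        filter_eq_empty_iff.2 fun y _ hy ↦ hc ⟨y, hy⟩
      simp [this]
  have hsum : ∑ c, #{y : K | y ^ 2 + y = c} = ∑ c, g c := by
    rw [← card_eq_sum_card_fiberwise (fun _ _ ↦ mem_univ _), card_univ,
      ← card_trace_eq_mul_card (F := ZMod 2) 0, ZMod.card, sum_ite, sum_const_zero, add_zero,
      sum_const, smul_eq_mul]
  exact (sum_eq_sum_iff_of_le hle).1 hsum c (mem_univ c)

end ArtinSchreier

section Curve

variable {K : Type*} [Field K] [Fintype K] [DecidableEq K] [CharP K 2] [Algebra (ZMod 2) K]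

theorem card_curve_fiber_add (a : K) (ha : a ≠ 0) (x : K) :
    #{y : K | x * (y ^ 2 + y) = a * (x ^ 2 + 1)} + (if x = 0 then 2 else 0) =
      if trace (ZMod 2) K (a * (x + x⁻¹)) = 0 then 2 else 0 := by
  rcases eq_or_ne x 0 with rfl | hx
  · simp [ha.symm]
  · have hcurve : ∀ y : K, x * (y ^ 2 + y) = a * (x ^ 2 + 1) ↔ y ^ 2 + y = a * (x + x⁻¹) := by
      intro y
      rw [show a * (x ^ 2 + 1) = x * (a * (x + x⁻¹)) by field_simp, mul_right_inj' hx]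
    simp only [hcurve, card_sq_add_self_eq, if_neg hx, add_zero]

theorem card_curve_add_two (a : K) (ha : a ≠ 0) :
    Nat.card {xy : K × K // xy.1 * (xy.2 ^ 2 + xy.2) = a * (xy.1 ^ 2 + 1)} + 2 =
      2 * #{x : K | trace (ZMod 2) K (a * (x + x⁻¹)) = 0} := by
  have hpairs : Nat.card {xy : K × K // xy.1 * (xy.2 ^ 2 + xy.2) = a * (xy.1 ^ 2 + 1)} =
      ∑ x : K, #{y : K | x * (y ^ 2 + y) = a * (x ^ 2 + 1)} := by
    simp only [Nat.card_eq_fintype_card, Fintype.card_subtype, card_filter,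
      Fintype.sum_prod_type]
  rw [hpairs, card_filter, mul_sum]
  simp only [mul_ite, mul_one, mul_zero, ← card_curve_fiber_add a ha, sum_add_distrib,
    sum_ite_eq', mem_univ, if_true]

end Curve

section TraceInverse

variable (F K : Type*) [Field F] [DecidableEq F] [Field K] [Fintype K] [Algebra F K]

noncomputable def traceInvCount (s u : F) : ℕ := #{x : K | trace F K x = s ∧ trace F K x⁻¹ = u}

variable {F K}

theorem traceInvCount_comm (s u : F) : traceInvCount F K s u = traceInvCount F K u s :=
  card_equiv (Equiv.inv K) fun x ↦ by simp [and_comm]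

theorem traceInvCount_mul_inv {c : F} (hc : c ≠ 0) (s u : F) :
    traceInvCount F K (c * s) (c⁻¹ * u) = traceInvCount F K s u := by
  refine (card_equiv (Equiv.mulLeft₀ (algebraMap F K c) ((map_ne_zero _).2 hc)) fun x ↦ ?_).symm
  have hinv : (algebraMap F K c * x)⁻¹ = algebraMap F K c⁻¹ * x⁻¹ := by rw [mul_inv, map_inv₀]
  simp only [mem_filter, mem_univ, true_and, Equiv.mulLeft₀_apply, hinv, trace_algebraMap_mul,
    mul_right_inj' hc, mul_right_inj' (inv_ne_zero hc)]

theorem sum_traceInvCount [Fintype F] (s : F) :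
    ∑ u, traceInvCount F K s u = #{x : K | trace F K x = s} := by
  rw [card_eq_sum_card_fiberwise (f := fun x ↦ trace F K x⁻¹) (t := univ) fun _ _ ↦ mem_univ _]
  simp only [traceInvCount, filter_filter]

theorem card_trace_eq_trace_inv [Fintype F] [CharP F 2] :
    (Fintype.card F * (Fintype.card F - 1) * #{x : K | trace F K x = trace F K x⁻¹} : ℤ) =
      Fintype.card F ^ 2 * traceInvCount F K 0 0 + (Fintype.card F - 2) * Fintype.card K := by
  have hrow (s : F) : (∑ u, traceInvCount F K s u) * Fintype.card F = Fintype.card K := by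
    rw [sum_traceInvCount, card_trace_eq_mul_card]
  have hdiag : #{x : K | trace F K x = trace F K x⁻¹} = ∑ s, traceInvCount F K s s := by
    rw [card_eq_sum_card_fiberwise (f := trace F K) (t := univ) fun _ _ ↦ mem_univ _]
    refine sum_congr rfl fun s _ ↦ ?_
    rw [filter_filter, traceInvCount]
    refine congrArg card (filter_congr fun x _ ↦ ?_)
    constructor
    · rintro ⟨hx, rfl⟩; exact ⟨rfl, hx.symm⟩
    · rintro ⟨rfl, hx⟩; exact ⟨hx.symm, rfl⟩
  have hsquare : ∑ s ∈ univ.erase 0, traceInvCount F K s s =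
      ∑ γ ∈ univ.erase 0, traceInvCount F K γ 1 := by
    refine sum_equiv (frobeniusEquiv F 2) (by simp) fun s hs ↦ ?_
    have hs0 := ne_of_mem_erase hs
    rw [RingEquiv.coe_toEquiv, frobeniusEquiv_apply, frobenius_def,
      ← traceInvCount_mul_inv hs0 s s, inv_mul_cancel₀ hs0, sq]
  have hrow0 : ∑ u ∈ univ.erase 0, traceInvCount F K 0 u =
      #(univ.erase (0 : F)) * traceInvCount F K 0 1 := by
    rw [← smul_eq_mul, ← sum_const]
    refine sum_congr rfl fun u hu ↦ ?_
    have hu0 := ne_of_mem_erase hu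
    rw [← traceInvCount_mul_inv hu0 0 u, mul_zero, inv_mul_cancel₀ hu0]
  have hunits : #(univ.erase (0 : F)) + 1 = Fintype.card F := card_erase_add_one (mem_univ 0)
  have h0 := hrow 0
  have h1 := hrow 1
  rw [← add_sum_erase _ _ (mem_univ 0), hrow0] at h0
  rw [sum_congr rfl fun γ _ ↦ traceInvCount_comm 1 γ, ← add_sum_erase _ _ (mem_univ 0)] at h1
  rw [hdiag, ← add_sum_erase _ _ (mem_univ 0), hsquare, ← hunits]
  rw [← hunits] at h0 h1
  zify at h0 h1
  push_cast at h0 h1 ⊢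
  linear_combination ((univ.erase (0 : F)).card : ℤ) * h1 - h0

end TraceInverse

section UnitsSum

variable {F : Type*} [Field F] [Fintype F] [DecidableEq F]

theorem sum_units_add_apply_zero {M : Type*} [AddCommMonoid M] (f : F → M) :
    ∑ u : Fˣ, f u + f 0 = ∑ a, f a := by
  have hunits : univ.map ⟨((↑) : Fˣ → F), Units.val_injective⟩ = univ.erase 0 := by
    ext a
    simp only [mem_map, mem_univ, true_and, mem_erase, and_true]
    exact isUnit_iff_ne_zero
  rw [← sum_erase_add (univ : Finset F) f (mem_univ 0), ← hunits, sum_map]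
  rfl

theorem two_mul_card_trace_mul_eq_zero [Algebra (ZMod 2) F] (v : F) :
    2 * #{a : F | trace (ZMod 2) F (a * v) = 0} =
      if v = 0 then 2 * Fintype.card F else Fintype.card F := by
  rcases eq_or_ne v 0 with rfl | hv
  · simp
  · rw [if_neg hv, mul_comm, ← card_trace_mul_eq_mul_card (F := ZMod 2) hv 0, ZMod.card]

end UnitsSum

section CurveSum

variable {F K : Type*} [Field F] [Fintype F] [Field K] [Fintype K] [DecidableEq K] [Algebra F K]
  [CharP K 2] [Algebra (ZMod 2) F] [Algebra (ZMod 2) K] [IsScalarTower (ZMod 2) F K]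

theorem card_curve_algebraMap_add_two {α : F} (hα : α ≠ 0) :
    Nat.card {xy : K × K // xy.1 * (xy.2 ^ 2 + xy.2) = algebraMap F K α * (xy.1 ^ 2 + 1)} + 2 =
      2 * #{x : K | trace (ZMod 2) F (α * (trace F K x + trace F K x⁻¹)) = 0} := by
  have htrace (x : K) : trace (ZMod 2) K (algebraMap F K α * (x + x⁻¹)) =
      trace (ZMod 2) F (α * (trace F K x + trace F K x⁻¹)) := by
    rw [← trace_trace (S := F), trace_algebraMap_mul, map_add]
  rw [card_curve_add_two _ ((map_ne_zero _).2 hα)]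
  simp only [htrace]

theorem sum_card_curve_add_two [DecidableEq F] [CharP F 2] :
    ∑ α : Fˣ, (Nat.card {xy : K × K // xy.1 * (xy.2 ^ 2 + xy.2) =
        algebraMap F K α * (xy.1 ^ 2 + 1)} + 2) + 2 * Fintype.card K =
      Fintype.card F * #{x : K | trace F K x = trace F K x⁻¹} +
        Fintype.card F * Fintype.card K := by
  have hzero : 2 * #{x : K | trace (ZMod 2) F (0 * (trace F K x + trace F K x⁻¹)) = 0} =
      2 * Fintype.card K := by
    simp
  rw [sum_congr rfl fun (α : Fˣ) _ ↦ card_curve_algebraMap_add_two α.ne_zero, ← hzero,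
    sum_units_add_apply_zero fun α : F ↦
      2 * #{x : K | trace (ZMod 2) F (α * (trace F K x + trace F K x⁻¹)) = 0},
    ← mul_sum]
  have hsplit (x : K) : 2 * #{α : F | trace (ZMod 2) F (α * (trace F K x + trace F K x⁻¹)) = 0} =
      Fintype.card F * (if trace F K x = trace F K x⁻¹ then 1 else 0) + Fintype.card F := by
    simp only [two_mul_card_trace_mul_eq_zero, CharTwo.add_eq_zero]
    split_ifs <;> ring
  have hswap : ∑ α : F, #{x : K | trace (ZMod 2) F (α * (trace F K x + trace F K x⁻¹)) = 0} =
      ∑ x : K, #{α : F | trace (ZMod 2) F (α * (trace F K x + trace F K x⁻¹)) = 0} := by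
    simp only [card_filter]
    exact sum_comm
  rw [hswap, mul_sum, sum_congr rfl fun x _ ↦ hsplit x, sum_add_distrib, ← mul_sum, ← card_filter,
    sum_const, card_univ, smul_eq_mul, mul_comm (Fintype.card K)]

end CurveSum

theorem stmt7_general (r q n : ℕ) (hq : q = 2 ^ r)
    (Fq K : Type) [Field Fq] [Fintype Fq] [DecidableEq Fq] [Field K] [Fintype K] [Algebra Fq K]
    (hFq : Fintype.card Fq = q) (hK : Module.finrank Fq K = n) :
    (q : ℤ) ^ 2 * (Nat.card {a : K //
        Algebra.trace Fq K a = 0 ∧ Algebra.trace Fq K a⁻¹ = 0} : ℤ) =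
    (q : ℤ) ^ n + ((q : ℤ) - 1) * ∑ α : Fqˣ,
      ((Nat.card {xy : K × K // xy.1 * (xy.2 ^ 2 + xy.2) =
          algebraMap Fq K (α : Fq) * (xy.1 ^ 2 + 1)} : ℤ) - (q : ℤ) ^ n + 2) := by
  classical
  have : CharP Fq 2 := charP_of_card_eq_prime_pow (hFq.trans hq)
  have : CharP K 2 := charP_of_injective_algebraMap' Fq 2
  let := ZMod.algebra Fq 2
  let := ZMod.algebra K 2
  have : IsScalarTower (ZMod 2) Fq K := .of_algebraMap_eq' (RingHom.ext_zmod _ _)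
  have hcardK : Fintype.card K = q ^ n := by rw [Module.card_eq_pow_finrank (K := Fq), hFq, hK]
  have hunits : (Fintype.card Fqˣ : ℤ) = q - 1 := by
    rw [Fintype.card_units, hFq, Nat.cast_sub (hFq ▸ Fintype.card_pos), Nat.cast_one]
  have hcount : Nat.card {a : K // trace Fq K a = 0 ∧ trace Fq K a⁻¹ = 0} =
      traceInvCount Fq K 0 0 := by
    rw [Nat.card_eq_fintype_card, Fintype.card_subtype, traceInvCount]
  have hcurves := sum_card_curve_add_two (F := Fq) (K := K)
  have hdiag := card_trace_eq_trace_inv (F := Fq) (K := K)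
  rw [hcardK, hFq] at hcurves hdiag
  zify at hcurves
  simp only [sub_add_eq_add_sub, sum_sub_distrib, sum_const, card_univ, nsmul_eq_mul, hunits, hcount]
  push_cast at hcurves hdiag ⊢
  linear_combination (1 - (q : ℤ)) * hcurves - hdiag

/-- Let `q = 2 ^ r` be an even prime power, `n ≥ 1`, `Fq` a field with
`q` elements and `K` an extension of `Fq` of degree `n`.  For nonzero `α ∈ Fq` let `N_α`
be the number of pairs `(x, y) ∈ K × K` with `x·(y² + y) = α·(x² + 1)`.  Then
`q² · F_q(n,0,0) = q^n + (q − 1) · ∑_{α ∈ Fq, α ≠ 0} (N_α − q^n + 2)`, where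
`F_q(n,0,0)` is the number of `a ∈ K` with `Tr(a) = 0` and `Tr(a⁻¹) = 0`
(with the convention `0⁻¹ = 0`), `Tr` being the field trace from `K` to `Fq`. -/
theorem stmt7 (r q n : ℕ) (hr : 1 ≤ r) (hq : q = 2 ^ r) (hn : 1 ≤ n)
    (Fq K : Type) [Field Fq] [Fintype Fq] [DecidableEq Fq] [Field K] [Fintype K] [Algebra Fq K]
    (hFq : Fintype.card Fq = q) (hK : Module.finrank Fq K = n) :
    (q : ℤ) ^ 2 * (Nat.card {a : K //
        Algebra.trace Fq K a = 0 ∧ Algebra.trace Fq K a⁻¹ = 0} : ℤ) =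
    (q : ℤ) ^ n + ((q : ℤ) - 1) * ∑ α : Fqˣ,
      ((Nat.card {xy : K × K // xy.1 * (xy.2 ^ 2 + xy.2) =
          algebraMap Fq K (α : Fq) * (xy.1 ^ 2 + 1)} : ℤ) - (q : ℤ) ^ n + 2) :=
  stmt7_general r q n hq Fq K hFq hK
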